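/- arXiv:1509.00866 — 6 statements merged into one kernel-verified Lean document; each statement's English description precedes it below -/
import Mathlib

section
/- There exists a bi-soft topological space (X, T1, T2, E) which is pairwise soft T0 but such that neither (X, T1, E) nor (X, T2, E) is a soft T0-space. -/
universe u v

/-- A soft point membership: `x` belongs to the soft set `F` iff `x ∈ F e` for all `e`. -/
def SoftMem {X E : Type*} (x : X) (F : E → Set X) : Prop := ∀ e, x ∈ F e

/-- A soft topology on `X` with parameter set `E`. -/
def IsSoftTopology {X E : Type*} (T : Set (E → Set X)) : Prop :=
  (fun _ => (∅ : Set X)) ∈ T ∧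
  (fun _ => (Set.univ : Set X)) ∈ T ∧
  (∀ S ⊆ T, (fun e => ⋃ F ∈ S, F e) ∈ T) ∧
  (∀ F ∈ T, ∀ G ∈ T, (fun e => F e ∩ G e) ∈ T)

/-- A collection of subsets of `X` forming a topology (as a set of open sets). -/
def IsTopologyOn {X : Type*} (C : Set (Set X)) : Prop :=
  (∅ : Set X) ∈ C ∧ (Set.univ : Set X) ∈ C ∧
  (∀ S ⊆ C, ⋃₀ S ∈ C) ∧ (∀ U ∈ C, ∀ V ∈ C, U ∩ V ∈ C)

/-- The parameterized topology `T_e = {F e : F ∈ T}`. -/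
def ParamTop {X E : Type*} (T : Set (E → Set X)) (e : E) : Set (Set X) :=
  {s | ∃ F ∈ T, F e = s}

def SoftT0 {X E : Type*} (T : Set (E → Set X)) : Prop :=
  ∀ x y : X, x ≠ y → ∃ F ∈ T,
    (SoftMem x F ∧ ¬ SoftMem y F) ∨ (SoftMem y F ∧ ¬ SoftMem x F)

def SoftT1 {X E : Type*} (T : Set (E → Set X)) : Prop :=
  ∀ x y : X, x ≠ y →
    (∃ F ∈ T, SoftMem x F ∧ ¬ SoftMem y F) ∧ (∃ G ∈ T, SoftMem y G ∧ ¬ SoftMem x G)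

def SoftT2 {X E : Type*} (T : Set (E → Set X)) : Prop :=
  ∀ x y : X, x ≠ y → ∃ F ∈ T, ∃ G ∈ T,
    SoftMem x F ∧ SoftMem y G ∧ ∀ e, F e ∩ G e = ∅

def PairwiseSoftT0 {X E : Type*} (T1 T2 : Set (E → Set X)) : Prop :=
  ∀ x y : X, x ≠ y →
    (∃ F ∈ T1, SoftMem x F ∧ ¬ SoftMem y F) ∨ (∃ G ∈ T2, SoftMem y G ∧ ¬ SoftMem x G)

def PairwiseSoftT1 {X E : Type*} (T1 T2 : Set (E → Set X)) : Prop :=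
  ∀ x y : X, x ≠ y →
    (∃ F ∈ T1, SoftMem x F ∧ ¬ SoftMem y F) ∧ (∃ G ∈ T2, SoftMem y G ∧ ¬ SoftMem x G)

def PairwiseSoftT2 {X E : Type*} (T1 T2 : Set (E → Set X)) : Prop :=
  ∀ x y : X, x ≠ y → ∃ F ∈ T1, ∃ G ∈ T2,
    SoftMem x F ∧ SoftMem y G ∧ ∀ e, F e ∩ G e = ∅

/-- The smallest soft topology containing `T1 ∪ T2`. -/
def SoftSup {X E : Type*} (T1 T2 : Set (E → Set X)) : Set (E → Set X) :=
  ⋂₀ {T | IsSoftTopology T ∧ T1 ⊆ T ∧ T2 ⊆ T}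

/-- The relative (subspace) soft topology on `Y ⊆ X`. -/
def SoftSub {X E : Type*} (Y : Set X) (T : Set (E → Set X)) : Set (E → Set X) :=
  {G | ∃ F ∈ T, G = fun e => Y ∩ F e}

/-- A soft set is soft closed if its pointwise complement is soft open. -/
def IsSoftClosed {X E : Type*} (T : Set (E → Set X)) (F : E → Set X) : Prop :=
  (fun e => (F e)ᶜ) ∈ T

/-- The soft closure: the pointwise intersection of all soft closed supersets. -/
def softClosure {X E : Type*} (T : Set (E → Set X)) (F : E → Set X) : E → Set X :=
  fun e => ⋂ G ∈ {G : E → Set X | IsSoftClosed T G ∧ ∀ e', F e' ⊆ G e'}, G e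

theorem stmt3 :
    ∃ (T1 T2 : Set (Fin 2 → Set (Fin 4))),
      IsSoftTopology T1 ∧ IsSoftTopology T2 ∧
      PairwiseSoftT0 T1 T2 ∧ ¬ SoftT0 T1 ∧ ¬ SoftT0 T2 := by
  classical
  -- T1: soft sets that cannot distinguish 2 and 3; T2: cannot distinguish 0 and 1.
  refine ⟨{F | ∀ e, ((2:Fin 4) ∈ F e ↔ (3:Fin 4) ∈ F e)},
          {F | ∀ e, ((0:Fin 4) ∈ F e ↔ (1:Fin 4) ∈ F e)}, ?_, ?_, ?_, ?_, ?_⟩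
  · refine ⟨fun e => Iff.rfl, fun e => Iff.rfl, ?_, ?_⟩
    · intro S hS e
      simp only [Set.mem_iUnion]
      constructor
      · rintro ⟨F, hF, h⟩; exact ⟨F, hF, ((hS hF) e).1 h⟩
      · rintro ⟨F, hF, h⟩; exact ⟨F, hF, ((hS hF) e).2 h⟩
    · intro F hF G hG e
      constructor
      · rintro ⟨h1, h2⟩; exact ⟨(hF e).1 h1, (hG e).1 h2⟩
      · rintro ⟨h1, h2⟩; exact ⟨(hF e).2 h1, (hG e).2 h2⟩
  · refine ⟨fun e => Iff.rfl, fun e => Iff.rfl, ?_, ?_⟩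
    · intro S hS e
      simp only [Set.mem_iUnion]
      constructor
      · rintro ⟨F, hF, h⟩; exact ⟨F, hF, ((hS hF) e).1 h⟩
      · rintro ⟨F, hF, h⟩; exact ⟨F, hF, ((hS hF) e).2 h⟩
    · intro F hF G hG e
      constructor
      · rintro ⟨h1, h2⟩; exact ⟨(hF e).1 h1, (hG e).1 h2⟩
      · rintro ⟨h1, h2⟩; exact ⟨(hF e).2 h1, (hG e).2 h2⟩
  · intro x y hxy
    by_cases hx : x = 0 ∨ x = 1
    · -- use T1 with constant {x}
      left
      refine ⟨fun _ => {x}, ?_, fun e => rfl, ?_⟩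
      · intro e
        rcases hx with h | h <;> subst h <;> simp [Set.mem_singleton_iff]
      · intro h
        exact hxy ((h 0).symm)
    · push_neg at hx
      have hx23 : x = 2 ∨ x = 3 := by omega
      by_cases hy : y = 0 ∨ y = 1
      · -- use T2 with constant {0,1}
        right
        refine ⟨fun _ => {0, 1}, ?_, ?_, ?_⟩
        · intro e; simp
        · intro e
          rcases hy with h | h <;> subst h <;> simp
        · intro h
          have := h 0
          rcases hx23 with h' | h' <;> subst h' <;> simp at this
      · -- y ∈ {2,3}: use T2 with constant {y}
        push_neg at hy
        have hy23 : y = 2 ∨ y = 3 := by omega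
        right
        refine ⟨fun _ => {y}, ?_, fun e => rfl, ?_⟩
        · intro e
          rcases hy23 with h | h <;> subst h <;> simp [Set.mem_singleton_iff]
        · intro h
          exact hxy ((h 0).symm).symm
  · intro h
    obtain ⟨F, hF, hsep⟩ := h 2 3 (by decide)
    have key : SoftMem (2:Fin 4) F ↔ SoftMem (3:Fin 4) F := by
      constructor
      · intro h e; exact (hF e).1 (h e)
      · intro h e; exact (hF e).2 (h e)
    rcases hsep with ⟨h1, h2⟩ | ⟨h1, h2⟩
    · exact h2 (key.1 h1)
    · exact h2 (key.2 h1)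
  · intro h
    obtain ⟨F, hF, hsep⟩ := h 0 1 (by decide)
    have key : SoftMem (0:Fin 4) F ↔ SoftMem (1:Fin 4) F := by
      constructor
      · intro h e; exact (hF e).1 (h e)
      · intro h e; exact (hF e).2 (h e)
    rcases hsep with ⟨h1, h2⟩ | ⟨h1, h2⟩
    · exact h2 (key.1 h1)
    · exact h2 (key.2 h1)
end

section
/- A bi-soft topological space (X, T1, T2, E) is a pairwise soft T1-space if and only if both (X, T1, E) and (X, T2, E) are soft T1-spaces. -/
universe u v

theorem stmt7 {X E : Type*} (T1 T2 : Set (E → Set X))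
    (hT1 : IsSoftTopology T1) (hT2 : IsSoftTopology T2) :
    PairwiseSoftT1 T1 T2 ↔ (SoftT1 T1 ∧ SoftT1 T2) := by

  constructor
  · intro h
    constructor
    · intro x y hxy
      exact ⟨(h x y hxy).1, (h y x hxy.symm).1⟩
    · intro x y hxy
      exact ⟨(h y x hxy.symm).2, (h x y hxy).2⟩
  · rintro ⟨h1, h2⟩ x y hxy
    exact ⟨(h1 x y hxy).1, (h2 x y hxy).2⟩
end

section
/- There exists a bi-soft topological space (X, T1, T2, E) that is not pairwise soft T1 but such that (X, T1 ∨ T2, E) is a soft T1-space. -/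
universe u v

lemma indiscrete_soft_topology {X E : Type*} :
    IsSoftTopology ({fun _ => (∅ : Set X), fun _ => Set.univ} : Set (E → Set X)) := by
  constructor
  · left; rfl
  refine ⟨Or.inr rfl, ?_, ?_⟩
  · intro S hS
    by_cases h : (fun _ => (Set.univ : Set X)) ∈ S
    · right
      funext e
      apply Set.eq_univ_of_univ_subset
      exact Set.subset_biUnion_of_mem (u := fun F => F e) h
    · left
      funext e
      simp only [Set.eq_empty_iff_forall_notMem, Set.mem_iUnion]
      rintro x ⟨F, hF, hx⟩
      rcases hS hF with rfl | rfl
      · exact hx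
      · exact h hF
  · rintro F hF G hG
    rcases hF with rfl | rfl
    · left; funext e; simp
    rcases hG with rfl | rfl
    · left; funext e; simp
    · right; funext e; simp

lemma univ_mem_softsup {X E : Type*} (T1 : Set (E → Set X)) (F : E → Set X) :
    F ∈ SoftSup T1 Set.univ := by
  intro T hT
  exact hT.2.2 (Set.mem_univ F)

theorem stmt9 :
    ∃ (T1 T2 : Set (Fin 2 → Set (Fin 4))),
      IsSoftTopology T1 ∧ IsSoftTopology T2 ∧
      ¬ PairwiseSoftT1 T1 T2 ∧ SoftT1 (SoftSup T1 T2) := by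
  refine ⟨{fun _ => ∅, fun _ => Set.univ}, Set.univ, indiscrete_soft_topology,
    ⟨Set.mem_univ _, Set.mem_univ _, fun _ _ => Set.mem_univ _, fun _ _ _ _ => Set.mem_univ _⟩,
    ?_, ?_⟩
  · intro h
    obtain ⟨⟨F, hF, hx, hy⟩, -⟩ := h 0 1 (by decide)
    rcases hF with rfl | rfl
    · exact hx 0
    · exact hy fun e => Set.mem_univ _
  · intro x y hxy
    refine ⟨⟨fun _ => {x}, univ_mem_softsup _ _, fun e => rfl, ?_⟩,
      ⟨fun _ => {y}, univ_mem_softsup _ _, fun e => rfl, ?_⟩⟩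
    · intro h; exact hxy (h 0).symm
    · intro h; exact hxy (h 0)
end

section
/- Let X be an infinite set, T1 the discrete soft topology on X (all soft sets) and T2 the soft cofinite topology: T2 = {Φ} ∪ {(F,E) : X \ F(e) is finite for all e ∈ E}. Then T2 is a soft topology, (X, T1, T2, E) is a pairwise soft T2-space, but (X, T2, E) is not a soft T2-space. -/
universe u v

theorem stmt14 {X E : Type*} [Infinite X] [Nonempty E]
    (T1 T2 : Set (E → Set X))
    (hT1 : T1 = Set.univ)
    (hT2 : T2 = insert (fun _ => (∅ : Set X)) {F | ∀ e, (F e)ᶜ.Finite}) :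
    IsSoftTopology T2 ∧ PairwiseSoftT2 T1 T2 ∧ ¬ SoftT2 T2 := by

  subst hT1 hT2
  have hemp : (fun _ : E => (∅ : Set X)) ∈ insert (fun _ => (∅ : Set X)) {F : E → Set X | ∀ e, (F e)ᶜ.Finite} := Set.mem_insert _ _
  refine ⟨⟨hemp, ?_, ?_, ?_⟩, ?_, ?_⟩
  · right; intro e; simp
  · intro S hS
    by_cases h : ∀ F ∈ S, F = (fun _ => (∅ : Set X))
    · left
      funext e
      ext a; simp only [Set.mem_iUnion, Set.mem_empty_iff_false, iff_false]
      rintro ⟨F, hF, ha⟩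
      rw [h F hF] at ha; exact ha
    · push_neg at h
      obtain ⟨F0, hF0S, hF0⟩ := h
      rcases hS hF0S with h0 | h0
      · exact absurd h0 hF0
      · right
        intro e
        refine (h0 e).subset ?_
        intro a ha
        simp only [Set.mem_compl_iff, Set.mem_iUnion] at ha ⊢
        exact fun hm => ha ⟨F0, hF0S, hm⟩
  · intro F hF G hG
    rcases hF with hF | hF
    · left; funext e; rw [hF]; simp
    rcases hG with hG | hG
    · left; funext e; rw [hG]; simp
    · right; intro e
      simp only [Set.compl_inter]
      exact (hF e).union (hG e)
  · intro x y hxy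
    refine ⟨(fun _ => {x}), trivial, (fun _ => {x}ᶜ), Or.inr (fun e => by simp), fun e => rfl, fun e => fun h => hxy (h ▸ rfl) , fun e => by simp⟩
  · intro h
    obtain ⟨x, y, hxy⟩ := Infinite.instNontrivial X
    obtain ⟨F, hF, G, hG, hxF, hyG, hdis⟩ := h x y hxy
    obtain ⟨e⟩ := ‹Nonempty E›
    have hFne : F ≠ fun _ => (∅ : Set X) := fun h => by
      have := hxF e; rw [h] at this; exact this
    have hGne : G ≠ fun _ => (∅ : Set X) := fun h => by
      have := hyG e; rw [h] at this; exact this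
    have hF' : ∀ e, (F e)ᶜ.Finite := hF.resolve_left hFne
    have hG' : ∀ e, (G e)ᶜ.Finite := hG.resolve_left hGne
    have : (F e ∩ G e).Infinite := by
      have : (F e ∩ G e)ᶜ.Finite := by
        rw [Set.compl_inter]; exact (hF' e).union (hG' e)
      exact Set.infinite_of_finite_compl this
    rw [hdis e] at this
    exact this Set.finite_empty
end

section
/- A bi-soft topological space (X, T1, T2, E) is pairwise soft Hausdorff if and only if for every x ∈ X and every y ≠ x there exists (F,E) ∈ T1 such that x ∈ (F,E) and y ∈ X̃ − cl_{T2}(F,E), where cl_{T2}(F,E) denotes the soft closure of (F,E) with respect to T2 (the intersection of all T2-soft-closed supersets of (F,E)). -/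
universe u v

theorem stmt18 {X E : Type*} (T1 T2 : Set (E → Set X))
    (hT1 : IsSoftTopology T1) (hT2 : IsSoftTopology T2) :
    PairwiseSoftT2 T1 T2 ↔
      ∀ x y : X, x ≠ y → ∃ F ∈ T1,
        SoftMem x F ∧ SoftMem y (fun e => Set.univ \ softClosure T2 F e) := by
  constructor
  · intro h x y hxy
    obtain ⟨F, hF, G, hG, hxF, hyG, hdisj⟩ := h x y hxy
    refine ⟨F, hF, hxF, fun e => ⟨Set.mem_univ _, ?_⟩⟩
    intro hy
    have hcl : y ∈ (fun e' => (G e')ᶜ) e := by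
      have := Set.mem_iInter₂.mp hy (fun e' => (G e')ᶜ)
      apply this
      constructor
      · show (fun e' => ((G e')ᶜ)ᶜ) ∈ T2
        simpa [compl_compl] using hG
      · intro e' z hz
        intro hzG
        have : z ∈ F e' ∩ G e' := ⟨hz, hzG⟩
        simp [hdisj e'] at this
    exact hcl (hyG e)
  · intro h x y hxy
    obtain ⟨F, hF, hxF, hy⟩ := h x y hxy
    refine ⟨F, hF, fun e => (softClosure T2 F e)ᶜ, ?_, hxF, ?_, ?_⟩
    · -- complement of closure is a union of open sets
      have := hT2.2.2.1 {H | H ∈ T2 ∧ ∀ e', F e' ⊆ (H e')ᶜ} (fun H hH => hH.1)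
      convert this using 1
      funext e
      ext z
      simp only [softClosure, Set.mem_compl_iff, Set.mem_iInter, Set.mem_iUnion,
        Set.mem_setOf_eq, not_forall]
      constructor
      · rintro ⟨G, hG, hzG⟩
        exact ⟨fun e' => (G e')ᶜ, ⟨by simpa [compl_compl, IsSoftClosed] using hG.1,
          fun e' => by simpa [compl_compl] using hG.2 e'⟩, hzG⟩
      · rintro ⟨H, ⟨hHT, hHF⟩, hzH⟩
        exact ⟨fun e' => (H e')ᶜ, ⟨by simpa [IsSoftClosed] using hHT, hHF⟩,
          fun hc => hc hzH⟩
    · intro e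
      exact ((hy e).2 : _)
    · intro e
      ext z
      simp only [Set.mem_inter_iff, Set.mem_compl_iff, Set.mem_empty_iff_false, iff_false]
      rintro ⟨hzF, hzc⟩
      apply hzc
      exact Set.mem_iInter₂.mpr fun G hG => hG.2 e hzF
end

section
/- If (X, T1, T2, E) is a pairwise soft T2-space, then for each x ∈ X the soft point (x,E) (given by e ↦ {x}) equals the intersection of the soft closures cl_{T2}(F,E) taken over all (F,E) ∈ T1 with x ∈ (F,E): (x,E) = ⋂ { cl_{T2}(F,E) : x ∈ (F,E) ∈ T1 }. -/
universe u v

theorem stmt19 {X E : Type*} (T1 T2 : Set (E → Set X))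
    (hT1 : IsSoftTopology T1) (hT2 : IsSoftTopology T2)
    (h : PairwiseSoftT2 T1 T2) :
    ∀ x : X, (fun _ : E => ({x} : Set X)) =
      fun e => ⋂ F ∈ {F | F ∈ T1 ∧ SoftMem x F}, softClosure T2 F e := by
  intro x
  funext e
  ext y
  simp only [Set.mem_singleton_iff, Set.mem_iInter]
  constructor
  · rintro rfl F ⟨_, hxF⟩
    simp only [softClosure, Set.mem_iInter]
    intro G hG
    exact hG.2 e (hxF e)
  · intro hy
    by_contra hne
    obtain ⟨F, hF1, G, hG2, hxF, hyG, hdisj⟩ := h x y (Ne.symm hne)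
    have hcl := hy F ⟨hF1, hxF⟩
    simp only [softClosure, Set.mem_iInter] at hcl
    have : y ∈ (fun e => (G e)ᶜ) e := by
      apply hcl
      constructor
      · show (fun e => ((G e)ᶜ)ᶜ) ∈ T2
        simpa using hG2
      · intro e' z hz
        simp only [Set.mem_compl_iff]
        intro hzG
        have := hdisj e'
        have : z ∈ F e' ∩ G e' := ⟨hz, hzG⟩
        rw [hdisj e'] at this
        exact this
    exact this (hyG e)
end
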